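/- Let A be a commutative ring, f ∈ A, and Â = lim_n A/(f^n). If M is an A-module with A_f ⊗_A M = 0 (i.e. the localization M_f vanishes), then the natural map M → Â ⊗_A M is an isomorphism. Consequently, if additionally Â ⊗_A M = 0, then M = 0. -/

import Mathlib

/-!
Since `M_f = 0`, every element of `M` is killed by a power of `f`. An element `a` of the completion
acts on an element `m` killed by `f ^ n` through its image in `A ⧸ (f ^ n)`, which gives an inverse
`Â ⊗ M → M` of `m ↦ 1 ⊗ m`. It is a two-sided inverse because the kernel of `Â → A ⧸ (f ^ n)` is
`f ^ n • Â`, so `a ⊗ m` depends only on the image of `a` in `A ⧸ (f ^ n)`.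
-/

open TensorProduct Submodule

theorem exists_smul_eq_zero_of_subsingleton_localization_tensor {A : Type*} [CommRing A]
    (S : Submonoid A) {M : Type*} [AddCommGroup M] [Module A M]
    (h : Subsingleton (Localization S ⊗[A] M)) (m : M) : ∃ s ∈ S, s • m = 0 := by
  have : IsLocalizedModule S (TensorProduct.mk A (Localization S) M 1) :=
    (isLocalizedModule_iff_isBaseChange S _ _).mpr (TensorProduct.isBaseChange A M _)
  exact (IsLocalizedModule.subsingleton_iff S (TensorProduct.mk A (Localization S) M 1)).mp h m

namespace AdicCompletion

variable {A : Type*} [CommRing A] {I : Ideal A} {M : Type*} [AddCommGroup M] [Module A M]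

theorem tmul_eq_zero_of_val_eq_zero (hI : I.FG) {n : ℕ} {a : AdicCompletion I A}
    (ha : a.val n = 0) {m : M} (hm : m ∈ torsionBySet A M ↑(I ^ n)) : a ⊗ₜ[A] m = 0 := by
  have ha : a ∈ (I ^ n • ⊤ : Submodule A (AdicCompletion I A)) := by
    rwa [pow_smul_top_eq_ker_eval hI]
  refine smul_induction_on ha (fun r hr x _ => ?_) (fun x y hx hy => ?_)
  · rw [smul_tmul, (mem_torsionBySet_iff _ _).mp hm ⟨r, hr⟩, tmul_zero]
  · rw [add_tmul, hx, hy, add_zero]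

theorem smul_eq_smul_of_mk_eq_mk {n : ℕ} {m : M} (hm : m ∈ torsionBySet A M ↑(I ^ n)) {b c : A}
    (hbc : (Submodule.Quotient.mk b : A ⧸ (I ^ n • ⊤ : Submodule A A)) = Submodule.Quotient.mk c) :
    b • m = c • m := by
  rw [Submodule.Quotient.eq, smul_eq_mul, Ideal.mul_top] at hbc
  rw [← sub_eq_zero, ← sub_smul]
  exact (mem_torsionBySet_iff _ _).mp hm ⟨_, hbc⟩

theorem mk_eq_val_of_le {a : AdicCompletion I A} {n k : ℕ} (hnk : n ≤ k) {b : A}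
    (hb : Submodule.Quotient.mk b = a.val k) : Submodule.Quotient.mk b = a.val n := by
  rw [← transitionMap_comp_eval_apply I A hnk, ← hb]
  rfl

variable (I) in
theorem torsionBySet_pow_mono :
    Monotone fun n : ℕ => torsionBySet A M ↑(I ^ n) :=
  fun _ _ h => torsionBySet_le_torsionBySet_of_subset (Ideal.pow_le_pow_right h)

section

variable (tor : ∀ m : M, ∃ n, m ∈ torsionBySet A M ↑(I ^ n))

noncomputable def torsionSMul (a : AdicCompletion I A) (m : M) : M :=
  (Submodule.Quotient.mk_surjective _ (a.val (tor m).choose)).choose • m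

theorem torsionSMul_eq {a : AdicCompletion I A} {n : ℕ} {m : M}
    (hm : m ∈ torsionBySet A M ↑(I ^ n)) {b : A} (hb : Submodule.Quotient.mk b = a.val n) :
    torsionSMul tor a m = b • m := by
  have hk := (tor m).choose_spec
  have hc := (Submodule.Quotient.mk_surjective _ (a.val (tor m).choose)).choose_spec
  rcases le_total (tor m).choose n with h | h
  · exact smul_eq_smul_of_mk_eq_mk hk (hc.trans (mk_eq_val_of_le h hb).symm)
  · exact smul_eq_smul_of_mk_eq_mk hm ((mk_eq_val_of_le h hc).trans hb.symm)

noncomputable def torsionSMulₗ : AdicCompletion I A →ₗ[A] M →ₗ[A] M :=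
  LinearMap.mk₂ A (torsionSMul tor)
    (fun a a' m => by
      obtain ⟨n, hm⟩ := tor m
      obtain ⟨b, hb⟩ := Submodule.Quotient.mk_surjective _ (a.val n)
      obtain ⟨b', hb'⟩ := Submodule.Quotient.mk_surjective _ (a'.val n)
      have hsum : Submodule.Quotient.mk (b + b') = (a + a').val n := by
        rw [Submodule.Quotient.mk_add, hb, hb', val_add_apply]
      rw [torsionSMul_eq tor hm hsum, torsionSMul_eq tor hm hb, torsionSMul_eq tor hm hb',
        add_smul])
    (fun r a m => by
      obtain ⟨n, hm⟩ := tor m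
      obtain ⟨b, hb⟩ := Submodule.Quotient.mk_surjective _ (a.val n)
      have hsmul : Submodule.Quotient.mk (r * b) = (r • a).val n := by
        rw [← smul_eq_mul, Submodule.Quotient.mk_smul, hb, val_smul_apply]
      rw [torsionSMul_eq tor hm hsmul, torsionSMul_eq tor hm hb, mul_smul])
    (fun a m m' => by
      obtain ⟨n, hm⟩ := tor m
      obtain ⟨n', hm'⟩ := tor m'
      have hN := torsionBySet_pow_mono (M := M) I (le_max_left n n')
      have hN' := torsionBySet_pow_mono (M := M) I (le_max_right n n')
      obtain ⟨b, hb⟩ := Submodule.Quotient.mk_surjective _ (a.val (max n n'))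
      rw [torsionSMul_eq tor (add_mem (hN hm) (hN' hm')) hb, torsionSMul_eq tor (hN hm) hb,
        torsionSMul_eq tor (hN' hm') hb, smul_add])
    (fun r a m => by
      obtain ⟨n, hm⟩ := tor m
      obtain ⟨b, hb⟩ := Submodule.Quotient.mk_surjective _ (a.val n)
      rw [torsionSMul_eq tor (Submodule.smul_mem _ r hm) hb, torsionSMul_eq tor hm hb,
        smul_comm])

theorem torsionSMul_one (m : M) : torsionSMul tor 1 m = m := by
  obtain ⟨n, hm⟩ := tor m
  rw [torsionSMul_eq tor hm (b := 1) (by rw [val_one]; rfl), one_smul]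

theorem one_tmul_torsionSMul (hI : I.FG) (a : AdicCompletion I A) (m : M) :
    (1 : AdicCompletion I A) ⊗ₜ[A] torsionSMul tor a m = a ⊗ₜ[A] m := by
  obtain ⟨n, hm⟩ := tor m
  obtain ⟨b, hb⟩ := Submodule.Quotient.mk_surjective _ (a.val n)
  have hval : (b • 1 - a).val n = 0 := by
    rw [val_sub_apply, val_smul_apply, val_one, ← hb, sub_eq_zero,
      show (1 : A ⧸ (I ^ n • ⊤ : Submodule A A)) = Submodule.Quotient.mk 1 from rfl,
      ← Submodule.Quotient.mk_smul]
    exact congrArg _ (mul_one b)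
  rw [torsionSMul_eq tor hm hb, tmul_smul, smul_tmul', ← sub_eq_zero, ← sub_tmul]
  exact tmul_eq_zero_of_val_eq_zero hI hval hm

end

noncomputable def equivTensorOfTorsion (tor : ∀ m : M, ∃ n, m ∈ torsionBySet A M ↑(I ^ n))
    (hI : I.FG) : M ≃ₗ[A] AdicCompletion I A ⊗[A] M :=
  LinearEquiv.ofLinearMap (TensorProduct.mk A _ M 1) (TensorProduct.lift (torsionSMulₗ tor))
    (TensorProduct.ext' (one_tmul_torsionSMul tor hI))
    (by ext m; exact torsionSMul_one tor m)

end AdicCompletion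

theorem stmt_12 {A : Type} [CommRing A] (f : A)
    (M : Type) [AddCommGroup M] [Module A M]
    (h : Subsingleton ((Localization (Submonoid.powers f)) ⊗[A] M)) :
    Function.Bijective
      (TensorProduct.mk A (AdicCompletion (Ideal.span {f}) A) M 1) ∧
    (Subsingleton ((AdicCompletion (Ideal.span {f}) A) ⊗[A] M) → Subsingleton M) := by
  have tor (m : M) : ∃ n, m ∈ torsionBySet A M ↑(Ideal.span {f} ^ n) := by
    obtain ⟨_, ⟨n, rfl⟩, hn⟩ := exists_smul_eq_zero_of_subsingleton_localization_tensor _ h m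
    refine ⟨n, ?_⟩
    rwa [Ideal.span_singleton_pow, ← Ideal.submodule_span_eq, torsionBySet_span_singleton_eq]
  let e := AdicCompletion.equivTensorOfTorsion tor (Submodule.fg_span_singleton f)
  exact ⟨e.bijective, fun _ => e.toEquiv.subsingleton⟩
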